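/- arXiv:1305.1572 — 4 statements merged into one kernel-verified Lean document; each statement's English description precedes it below -/
import Mathlib

section
/- Let f₋, f₊ : ℝ → ℝ be C¹ functions such that f₋, f₊, f₋′, f₊′ are bounded, and let f be the Poisson extension of (f₋, f₊). Then for every (s,t) in the open strip S, ∂f/∂s (s,t) equals the Poisson extension of (f₋′, f₊′) evaluated at (s,t). Moreover, if there are λ ∈ (0,1), S₀ ∈ ℝ and M > 0 with |f₋′(s)| ≤ M e^{−λs} and |f₊′(s)| ≤ M e^{−λs} for all s ≥ S₀, then there is M′ > 0 with |∂f/∂s (s,t)| ≤ M′ e^{−λs} for all s ≥ S₀ + 1 and all t ∈ (0,1). -/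
/-!
After the substitution `σ = u + s` the extension reads
`(1 / 2π) ∫ (P(u, t) f₋(u + s) + P(u, 1 - t) f₊(u + s)) du`, so `∂/∂s` falls on the boundary
data. Differentiating under the integral is legitimate because `P(·, t)` is integrable (it is
dominated by `2π` times a Cauchy density) and `f₋′, f₊′` are bounded.

For the decay, boundedness of `f′` on `(-∞, S₀]` and its decay on `[S₀, ∞)` merge into a global
bound `|f′(y)| ≤ K e^{-λy}`, valid since `λ ≥ 0`. Then
`|∂f/∂s (s, t)| ≤ K e^{-λs} ∫ P(u, t) e^{-λu} du`, and this integral is bounded uniformly in `t`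
because `P(u, t) ≤ 10 e^{-|u|}` for `|u| ≥ 1` and `λ < 1`.
-/

open Real MeasureTheory

/-- The Poisson kernel of the unit strip `{s + it : 0 < t < 1}`. -/
noncomputable def stripPoissonKernel (s t : ℝ) : ℝ :=
  Real.sin (π * t) / (Real.cosh s - Real.cos (π * t))

/-- The Poisson extension to the strip of a pair of boundary functions `f₋, f₊ : ℝ → ℝ`. -/
noncomputable def poissonExt (fm fp : ℝ → ℝ) (s t : ℝ) : ℝ :=
  (1 / (2 * π)) *
    ∫ σ : ℝ, (stripPoissonKernel (σ - s) t * fm σ + stripPoissonKernel (σ - s) (1 - t) * fp σ)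

namespace Real

lemma sq_le_sinh_sq (x : ℝ) : x ^ 2 ≤ sinh x ^ 2 := by
  rcases le_total 0 x with hx | hx
  · nlinarith [self_le_sinh_iff.2 hx]
  · nlinarith [sinh_le_self_iff.2 hx]

lemma one_add_sq_div_two_le_cosh (x : ℝ) : 1 + x ^ 2 / 2 ≤ cosh x := by
  have h := cosh_two_mul (x / 2)
  rw [show 2 * (x / 2) = x by ring, cosh_sq] at h
  nlinarith [sq_le_sinh_sq (x / 2)]

lemma exp_abs_div_two_le_cosh (x : ℝ) : exp |x| / 2 ≤ cosh x := by
  rw [← cosh_abs, cosh_eq]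
  linarith [exp_pos (-|x|)]

end Real

lemma integral_exp_neg_mul_abs {d : ℝ} (hd : 0 < d) : ∫ u, exp (-d * |u|) = 2 / d := by
  rw [integral_comp_abs (f := fun u ↦ exp (-d * u)), integral_exp_mul_Ioi (neg_lt_zero.2 hd)]
  simp only [mul_zero, exp_zero, neg_div_neg_eq]
  ring

lemma integrable_exp_neg_mul_abs {d : ℝ} (hd : 0 < d) : Integrable fun u ↦ exp (-d * |u|) :=
  .of_integral_ne_zero (by rw [integral_exp_neg_mul_abs hd]; positivity)

section StripPoissonKernel

variable {t : ℝ}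

lemma stripPoissonKernel_nonneg (ht0 : 0 ≤ t) (ht1 : t ≤ 1) (s : ℝ) :
    0 ≤ stripPoissonKernel s t :=
  div_nonneg (sin_nonneg_of_nonneg_of_le_pi (by positivity) (by nlinarith [pi_pos]))
    (sub_nonneg.2 ((cos_le_one _).trans (one_le_cosh s)))

@[fun_prop]
lemma measurable_stripPoissonKernel (t : ℝ) : Measurable fun s ↦ stripPoissonKernel s t := by
  unfold stripPoissonKernel; fun_prop

lemma cos_pi_mul_lt_one (ht0 : 0 < t) (ht1 : t < 1) : cos (π * t) < 1 := by
  simpa using cos_lt_cos_of_nonneg_of_le_pi le_rfl (by nlinarith [pi_pos] : π * t ≤ π)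
    (by positivity)

lemma stripPoissonKernel_le_cauchyPDFReal (ht0 : 0 < t) (ht1 : t < 1) (s : ℝ) :
    stripPoissonKernel s t ≤
      2 * π * ProbabilityTheory.cauchyPDFReal 0 (√(2 * (1 - cos (π * t)))).toNNReal s := by
  have hb : 0 < 1 - cos (π * t) := sub_pos.2 (cos_pi_mul_lt_one ht0 ht1)
  set γ := √(2 * (1 - cos (π * t)))
  have hγ : γ ^ 2 = 2 * (1 - cos (π * t)) := sq_sqrt (by positivity)
  have hsin : sin (π * t) ≤ γ := by
    refine le_sqrt_of_sq_le ?_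
    nlinarith [sin_sq_add_cos_sq (π * t), neg_one_le_cos (π * t)]
  rw [ProbabilityTheory.cauchyPDFReal_def, coe_toNNReal _ (sqrt_nonneg _), stripPoissonKernel]
  calc sin (π * t) / (cosh s - cos (π * t))
      ≤ γ / ((s - 0) ^ 2 / 2 + γ ^ 2 / 2) := by
        gcongr
        rw [sub_zero, hγ]
        linarith [Real.one_add_sq_div_two_le_cosh s]
    _ = 2 * π * (π⁻¹ * γ * ((s - 0) ^ 2 + γ ^ 2)⁻¹) := by
        field_simp [pi_pos.ne']

lemma integrable_stripPoissonKernel (ht0 : 0 < t) (ht1 : t < 1) :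
    Integrable fun s ↦ stripPoissonKernel s t :=
  ((ProbabilityTheory.integrable_cauchyPDFReal 0).const_mul (2 * π)).mono'
    (measurable_stripPoissonKernel t).aestronglyMeasurable
    (.of_forall fun s ↦ by
      rw [norm_of_nonneg (stripPoissonKernel_nonneg ht0.le ht1.le s)]
      exact stripPoissonKernel_le_cauchyPDFReal ht0 ht1 s)

lemma integral_stripPoissonKernel_le (ht0 : 0 < t) (ht1 : t < 1) :
    ∫ s, stripPoissonKernel s t ≤ 2 * π := by
  have hγ : (√(2 * (1 - cos (π * t)))).toNNReal ≠ 0 := by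
    simpa using cos_pi_mul_lt_one ht0 ht1
  calc ∫ s, stripPoissonKernel s t
      ≤ ∫ s, 2 * π *
          ProbabilityTheory.cauchyPDFReal 0 (√(2 * (1 - cos (π * t)))).toNNReal s :=
        integral_mono (integrable_stripPoissonKernel ht0 ht1)
          ((ProbabilityTheory.integrable_cauchyPDFReal 0).const_mul _)
          (stripPoissonKernel_le_cauchyPDFReal ht0 ht1)
    _ = 2 * π := by
        rw [integral_const_mul, ProbabilityTheory.integral_cauchyPDFReal_eq_one 0 hγ, mul_one]

lemma stripPoissonKernel_le_exp_neg_abs {s : ℝ} (hs : 1 ≤ |s|) :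
    stripPoissonKernel s t ≤ 10 * exp (-|s|) := by
  have he : 5 / 2 ≤ exp |s| := by
    linarith [exp_one_gt_d9, exp_le_exp.2 hs]
  have hden : exp |s| / 10 ≤ cosh s - cos (π * t) := by
    linarith [Real.exp_abs_div_two_le_cosh s, cos_le_one (π * t)]
  calc stripPoissonKernel s t ≤ 1 / (exp |s| / 10) :=
        div_le_div₀ zero_le_one (sin_le_one _) (by positivity) hden
    _ = 10 * exp (-|s|) := by rw [exp_neg]; field_simp

lemma stripPoissonKernel_mul_exp_le (ht0 : 0 < t) (ht1 : t < 1) {lam : ℝ} (hlam : |lam| ≤ 1)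
    (s : ℝ) :
    stripPoissonKernel s t * exp (-lam * s) ≤
      exp 1 * stripPoissonKernel s t + 10 * exp (-(1 - |lam|) * |s|) := by
  have hP := stripPoissonKernel_nonneg ht0.le ht1.le s
  have hweight : exp (-lam * s) ≤ exp (|lam| * |s|) :=
    exp_le_exp.2 (by rw [← abs_mul]; exact (neg_mul lam s ▸ neg_le_abs (lam * s)))
  rcases le_total |s| 1 with hs | hs
  · have : exp (-lam * s) ≤ exp 1 :=
      hweight.trans (exp_le_exp.2 (by nlinarith [abs_nonneg lam, abs_nonneg s]))
    nlinarith [exp_pos (-(1 - |lam|) * |s|)]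
  · calc stripPoissonKernel s t * exp (-lam * s)
        ≤ 10 * exp (-|s|) * exp (|lam| * |s|) :=
          mul_le_mul (stripPoissonKernel_le_exp_neg_abs hs) hweight
            (exp_pos _).le (by positivity)
      _ = 10 * exp (-(1 - |lam|) * |s|) := by rw [mul_assoc, ← exp_add]; ring_nf
      _ ≤ _ := le_add_of_nonneg_left (by positivity)

lemma integrable_stripPoissonKernel_mul_exp (ht0 : 0 < t) (ht1 : t < 1) {lam : ℝ}
    (hlam : |lam| < 1) : Integrable fun s ↦ stripPoissonKernel s t * exp (-lam * s) :=
  (((integrable_stripPoissonKernel ht0 ht1).const_mul _).add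
      ((integrable_exp_neg_mul_abs (sub_pos.2 hlam)).const_mul _)).mono'
    (by fun_prop)
    (.of_forall fun s ↦ by
      rw [norm_of_nonneg (by have := stripPoissonKernel_nonneg ht0.le ht1.le s; positivity)]
      exact stripPoissonKernel_mul_exp_le ht0 ht1 hlam.le s)

lemma integral_stripPoissonKernel_mul_exp_le (ht0 : 0 < t) (ht1 : t < 1) {lam : ℝ}
    (hlam : |lam| < 1) :
    ∫ s, stripPoissonKernel s t * exp (-lam * s) ≤ 2 * π * exp 1 + 20 / (1 - |lam|) := by
  have hd : 0 < 1 - |lam| := sub_pos.2 hlam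
  have hP := (integrable_stripPoissonKernel ht0 ht1).const_mul (exp 1)
  have hE := (integrable_exp_neg_mul_abs hd).const_mul 10
  calc ∫ s, stripPoissonKernel s t * exp (-lam * s)
      ≤ ∫ s, (exp 1 * stripPoissonKernel s t + 10 * exp (-(1 - |lam|) * |s|)) :=
        integral_mono (integrable_stripPoissonKernel_mul_exp ht0 ht1 hlam) (hP.add hE)
          (stripPoissonKernel_mul_exp_le ht0 ht1 hlam.le)
    _ = exp 1 * (∫ s, stripPoissonKernel s t) + 20 / (1 - |lam|) := by
        rw [integral_add hP hE, integral_const_mul, integral_const_mul,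
          integral_exp_neg_mul_abs hd]
        ring
    _ ≤ 2 * π * exp 1 + 20 / (1 - |lam|) := by
        nlinarith [integral_stripPoissonKernel_le ht0 ht1, exp_pos 1]

end StripPoissonKernel

lemma abs_le_mul_exp_of_bounded_of_decay {g : ℝ → ℝ} {C M lam S₀ : ℝ} (hlam : 0 ≤ lam)
    (hC : ∀ y, |g y| ≤ C) (hM : ∀ y, S₀ ≤ y → |g y| ≤ M * exp (-lam * y)) (y : ℝ) :
    |g y| ≤ max M (C * exp (lam * S₀)) * exp (-lam * y) := by
  rcases le_total S₀ y with hy | hy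
  · exact (hM y hy).trans (by gcongr; exact le_max_left _ _)
  · calc |g y| ≤ C * exp (lam * S₀) * exp (-lam * y) := by
          rw [mul_assoc, ← exp_add]
          refine (hC y).trans (le_mul_of_one_le_right ((abs_nonneg _).trans (hC y)) ?_)
          exact one_le_exp (by nlinarith)
      _ ≤ _ := by gcongr; exact le_max_right _ _

lemma integrable_mul_comp_add {k f : ℝ → ℝ} {C : ℝ} (hk : Integrable k) (hf : Measurable f)
    (hC : ∀ y, |f y| ≤ C) (x : ℝ) : Integrable fun u ↦ k u * f (u + x) :=
  hk.mul_bdd (hf.comp (measurable_add_const x)).aestronglyMeasurable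
    (.of_forall fun u ↦ hC (u + x))

lemma hasDerivAt_integral_mul_comp_add {k f : ℝ → ℝ} {C C' : ℝ} (hk : Integrable k)
    (hf : Differentiable ℝ f) (hC : ∀ y, |f y| ≤ C) (hC' : ∀ y, |deriv f y| ≤ C') (x : ℝ) :
    HasDerivAt (fun x ↦ ∫ u, k u * f (u + x)) (∫ u, k u * deriv f (u + x)) x := by
  refine (hasDerivAt_integral_of_dominated_loc_of_deriv_le (F := fun x u ↦ k u * f (u + x))
    (F' := fun x u ↦ k u * deriv f (u + x)) (bound := fun u ↦ |k u| * C')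
    Filter.univ_mem (.of_forall fun y ↦ ?_)
    (integrable_mul_comp_add hk hf.continuous.measurable hC x) ?_
    (.of_forall fun u y _ ↦ ?_) (hk.abs.mul_const C') (.of_forall fun u y _ ↦ ?_)).2
  · exact (integrable_mul_comp_add hk hf.continuous.measurable hC y).aestronglyMeasurable
  · exact (integrable_mul_comp_add hk (measurable_deriv f) hC' x).aestronglyMeasurable
  · rw [norm_mul, norm_eq_abs, norm_eq_abs]
    exact mul_le_mul_of_nonneg_left (hC' _) (abs_nonneg _)
  · exact ((hf (u + y)).hasDerivAt.comp_const_add u y).const_mul (k u)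

lemma poissonExt_eq_integral_comp_add (fm fp : ℝ → ℝ) (x t : ℝ) :
    poissonExt fm fp x t = (1 / (2 * π)) *
      ∫ u, (stripPoissonKernel u t * fm (u + x) + stripPoissonKernel u (1 - t) * fp (u + x)) := by
  rw [poissonExt, ← integral_add_right_eq_self _ x]
  simp only [add_sub_cancel_right]

section PoissonExt

variable {fm fp : ℝ → ℝ} {t : ℝ}

lemma poissonExt_eq_add (ht0 : 0 < t) (ht1 : t < 1) (hfm : Measurable fm) (hfp : Measurable fp)
    {Cm Cp : ℝ} (hCm : ∀ y, |fm y| ≤ Cm) (hCp : ∀ y, |fp y| ≤ Cp) (x : ℝ) :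
    poissonExt fm fp x t = 1 / (2 * π) * ((∫ u, stripPoissonKernel u t * fm (u + x)) +
      ∫ u, stripPoissonKernel u (1 - t) * fp (u + x)) := by
  rw [poissonExt_eq_integral_comp_add, integral_add
    (integrable_mul_comp_add (integrable_stripPoissonKernel ht0 ht1) hfm hCm x)
    (integrable_mul_comp_add (integrable_stripPoissonKernel (sub_pos.2 ht1) (sub_lt_self 1 ht0))
      hfp hCp x)]

lemma hasDerivAt_poissonExt (hfm : Differentiable ℝ fm) (hfp : Differentiable ℝ fp)
    {Cm Cp Cm' Cp' : ℝ} (hCm : ∀ y, |fm y| ≤ Cm) (hCp : ∀ y, |fp y| ≤ Cp)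
    (hCm' : ∀ y, |deriv fm y| ≤ Cm') (hCp' : ∀ y, |deriv fp y| ≤ Cp')
    (ht0 : 0 < t) (ht1 : t < 1) (s : ℝ) :
    HasDerivAt (fun x ↦ poissonExt fm fp x t) (poissonExt (deriv fm) (deriv fp) s t) s := by
  rw [funext (poissonExt_eq_add ht0 ht1 hfm.continuous.measurable hfp.continuous.measurable
    hCm hCp), poissonExt_eq_add ht0 ht1 (measurable_deriv fm) (measurable_deriv fp) hCm' hCp']
  have hk := integrable_stripPoissonKernel ht0 ht1
  have hk' := integrable_stripPoissonKernel (sub_pos.2 ht1) (sub_lt_self 1 ht0)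
  exact ((hasDerivAt_integral_mul_comp_add hk hfm hCm hCm' s).add
    (hasDerivAt_integral_mul_comp_add hk' hfp hCp hCp' s)).const_mul _

lemma abs_poissonExt_le (ht0 : 0 < t) (ht1 : t < 1) {lam K : ℝ} (hlam : |lam| < 1)
    (hfm : ∀ y, |fm y| ≤ K * exp (-lam * y)) (hfp : ∀ y, |fp y| ≤ K * exp (-lam * y))
    (s : ℝ) :
    |poissonExt fm fp s t| ≤ K * (2 * π * exp 1 + 20 / (1 - |lam|)) / π * exp (-lam * s) := by
  have hK : 0 ≤ K := nonneg_of_mul_nonneg_left ((abs_nonneg _).trans (hfm 0)) (exp_pos _)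
  have ht0' : 0 < 1 - t := sub_pos.2 ht1
  have ht1' : 1 - t < 1 := sub_lt_self 1 ht0
  set w : ℝ → ℝ → ℝ := fun τ u ↦ stripPoissonKernel u τ * exp (-lam * u)
  have hw : Integrable fun u ↦ K * exp (-lam * s) * (w t u + w (1 - t) u) :=
    ((integrable_stripPoissonKernel_mul_exp ht0 ht1 hlam).add
      (integrable_stripPoissonKernel_mul_exp ht0' ht1' hlam)).const_mul _
  have hpointwise : ∀ u, ‖stripPoissonKernel u t * fm (u + s) +
      stripPoissonKernel u (1 - t) * fp (u + s)‖ ≤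
        K * exp (-lam * s) * (w t u + w (1 - t) u) := by
    intro u
    have hexp : K * exp (-lam * (u + s)) = K * exp (-lam * s) * exp (-lam * u) := by
      rw [mul_assoc, ← exp_add]; ring_nf
    have hm := hexp ▸ hfm (u + s)
    have hp := hexp ▸ hfp (u + s)
    have hPm := stripPoissonKernel_nonneg ht0.le ht1.le u
    have hPp := stripPoissonKernel_nonneg ht0'.le ht1'.le u
    calc _ ≤ stripPoissonKernel u t * |fm (u + s)| +
          stripPoissonKernel u (1 - t) * |fp (u + s)| := by
          rw [norm_eq_abs]
          refine (abs_add_le _ _).trans_eq ?_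
          rw [abs_mul, abs_mul, abs_of_nonneg hPm, abs_of_nonneg hPp]
      _ ≤ _ := by
          simp only [w]
          nlinarith [mul_le_mul_of_nonneg_left hm hPm, mul_le_mul_of_nonneg_left hp hPp]
  calc |poissonExt fm fp s t|
      ≤ 1 / (2 * π) * ∫ u, K * exp (-lam * s) * (w t u + w (1 - t) u) := by
        rw [poissonExt_eq_integral_comp_add, abs_mul, abs_of_pos (by positivity)]
        gcongr
        exact norm_integral_le_of_norm_le hw (.of_forall hpointwise)
    _ ≤ 1 / (2 * π) * (K * exp (-lam * s) *
          (2 * (2 * π * exp 1 + 20 / (1 - |lam|)))) := by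
        rw [integral_const_mul, integral_add
          (integrable_stripPoissonKernel_mul_exp ht0 ht1 hlam)
          (integrable_stripPoissonKernel_mul_exp ht0' ht1' hlam)]
        gcongr
        linarith [integral_stripPoissonKernel_mul_exp_le ht0 ht1 hlam,
          integral_stripPoissonKernel_mul_exp_le ht0' ht1' hlam]
    _ = _ := by field_simp

end PoissonExt

/-- If `f₋, f₊` are `C¹` with `f₋, f₊, f₋′, f₊′` bounded, then `∂f/∂s` of the Poisson extension
equals the Poisson extension of the derivatives; moreover if `f₋′, f₊′` decay like `M e^{−λs}`
for `s ≥ S₀` (with `0 < λ < 1`), then `∂f/∂s` decays like `M′ e^{−λs}` for `s ≥ S₀ + 1`,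
uniformly in `t ∈ (0,1)`. -/
theorem poissonExt_deriv_s
    (fm fp : ℝ → ℝ) (hfm : ContDiff ℝ 1 fm) (hfp : ContDiff ℝ 1 fp)
    (hfmb : ∃ M : ℝ, ∀ s : ℝ, |fm s| ≤ M) (hfpb : ∃ M : ℝ, ∀ s : ℝ, |fp s| ≤ M)
    (hfmb' : ∃ M : ℝ, ∀ s : ℝ, |deriv fm s| ≤ M)
    (hfpb' : ∃ M : ℝ, ∀ s : ℝ, |deriv fp s| ≤ M) :
    (∀ s t : ℝ, 0 < t → t < 1 →
      deriv (fun x : ℝ => poissonExt fm fp x t) s =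
        poissonExt (deriv fm) (deriv fp) s t) ∧
    (∀ lam S₀ M : ℝ, 0 < lam → lam < 1 → 0 < M →
      (∀ s : ℝ, S₀ ≤ s → |deriv fm s| ≤ M * Real.exp (-lam * s)) →
      (∀ s : ℝ, S₀ ≤ s → |deriv fp s| ≤ M * Real.exp (-lam * s)) →
      ∃ M' : ℝ, 0 < M' ∧ ∀ s t : ℝ, S₀ + 1 ≤ s → 0 < t → t < 1 →
        |deriv (fun x : ℝ => poissonExt fm fp x t) s| ≤ M' * Real.exp (-lam * s)) := by
  obtain ⟨Cm, hCm⟩ := hfmb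
  obtain ⟨Cp, hCp⟩ := hfpb
  obtain ⟨Cm', hCm'⟩ := hfmb'
  obtain ⟨Cp', hCp'⟩ := hfpb'
  have hderiv : ∀ s t : ℝ, 0 < t → t < 1 →
      deriv (fun x ↦ poissonExt fm fp x t) s = poissonExt (deriv fm) (deriv fp) s t :=
    fun s t ht0 ht1 ↦ (hasDerivAt_poissonExt (hfm.differentiable one_ne_zero)
      (hfp.differentiable one_ne_zero) hCm hCp hCm' hCp' ht0 ht1 s).deriv
  refine ⟨hderiv, fun lam S₀ M hlam0 hlam1 hM hdm hdp ↦ ?_⟩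
  have hlam : |lam| < 1 := by rwa [abs_of_pos hlam0]
  set C := max Cm' Cp'
  set K := max M (C * exp (lam * S₀))
  refine ⟨K * (2 * π * exp 1 + 20 / (1 - |lam|)) / π,
    by have := sub_pos.2 hlam; positivity, fun s t _ ht0 ht1 ↦ ?_⟩
  rw [hderiv s t ht0 ht1]
  exact abs_poissonExt_le ht0 ht1 hlam
    (abs_le_mul_exp_of_bounded_of_decay hlam0.le (fun y ↦ (hCm' y).trans (le_max_left ..)) hdm)
    (abs_le_mul_exp_of_bounded_of_decay hlam0.le (fun y ↦ (hCp' y).trans (le_max_right ..)) hdp) s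
end

section
/- Let h : S̄ → ℂ be continuous on the closed strip S̄ = {s + it : 0 ≤ t ≤ 1}, holomorphic on the open strip S, and bounded. If h(s + i·0) ∈ ℝ and h(s + i·1) ∈ ℝ for every s ∈ ℝ, then h is constant, and this constant is real. -/
/-! The modulus of `exp (-i h)` is `exp (Im h)`, which is bounded on the strip and at most `1` on
its boundary, so by Phragmén–Lindelöf `Im h ≤ 0`; applied to `-h` as well, this gives `Im h = 0`.
A holomorphic function with vanishing imaginary part on a connected open set is a real constant by
the open mapping theorem, and continuity carries this to the closed strip. -/

open Complex Set Filter Asymptotics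

/-- The open unit strip `{s + it : s ∈ ℝ, 0 < t < 1}` in `ℂ`. -/
def openStrip : Set ℂ := {z : ℂ | 0 < z.im ∧ z.im < 1}

/-- The closed unit strip `{s + it : s ∈ ℝ, 0 ≤ t ≤ 1}` in `ℂ`. -/
def closedStrip : Set ℂ := {z : ℂ | 0 ≤ z.im ∧ z.im ≤ 1}

lemma openStrip_eq_preimage_im : openStrip = im ⁻¹' Ioo 0 1 := rfl

lemma closure_openStrip : closure openStrip = closedStrip := by
  rw [openStrip_eq_preimage_im, closure_preimage_im, closure_Ioo zero_ne_one]
  rfl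

lemma isOpen_openStrip : IsOpen openStrip :=
  isOpen_Ioo.preimage continuous_im

lemma isConnected_openStrip : IsConnected openStrip :=
  ((convex_Ioo (0 : ℝ) 1).linear_preimage imLm).isConnected ⟨I / 2, by norm_num [openStrip]⟩

namespace PhragmenLindelof

variable {a b : ℝ} {f : ℂ → ℂ}

theorem im_nonpos_horizontal_strip (hab : a < b) (hfd : DiffContOnCl ℂ f (im ⁻¹' Ioo a b))
    (hB : ∃ K, ∀ z ∈ im ⁻¹' Ioo a b, (f z).im ≤ K)
    (hle_a : ∀ z : ℂ, z.im = a → (f z).im ≤ 0) (hle_b : ∀ z : ℂ, z.im = b → (f z).im ≤ 0)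
    {z : ℂ} (hza : a ≤ z.im) (hzb : z.im ≤ b) : (f z).im ≤ 0 := by
  obtain ⟨K, hK⟩ := hB
  set g : ℂ → ℂ := fun w ↦ exp (-I * f w)
  have norm_g : ∀ w, ‖g w‖ = Real.exp (f w).im := by
    simp [g, norm_exp]
  have hgd : DiffContOnCl ℂ g (im ⁻¹' Ioo a b) :=
    differentiable_exp.comp_diffContOnCl (hfd.const_smul (-I))
  have hg_growth : ∃ c < Real.pi / (b - a), ∃ B,
      g =O[comap (_root_.abs ∘ re) atTop ⊓ 𝓟 (im ⁻¹' Ioo a b)]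
        fun w ↦ Real.exp (B * Real.exp (c * |w.re|)) := by
    refine ⟨0, div_pos Real.pi_pos (sub_pos.2 hab), K, IsBigO.of_bound 1 ?_⟩
    refine eventually_inf_principal.2 (Eventually.of_forall fun w hw ↦ ?_)
    simpa [norm_g] using hK w hw
  have := horizontal_strip (C := 1) hgd hg_growth
    (fun w hw ↦ by simpa [norm_g] using hle_a w hw)
    (fun w hw ↦ by simpa [norm_g] using hle_b w hw) hza hzb
  rwa [norm_g, Real.exp_le_one_iff] at this

theorem im_eq_zero_horizontal_strip (hab : a < b) (hfd : DiffContOnCl ℂ f (im ⁻¹' Ioo a b))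
    (hB : ∃ K, ∀ z ∈ im ⁻¹' Ioo a b, ‖f z‖ ≤ K)
    (ha : ∀ z : ℂ, z.im = a → (f z).im = 0) (hb : ∀ z : ℂ, z.im = b → (f z).im = 0)
    {z : ℂ} (hza : a ≤ z.im) (hzb : z.im ≤ b) : (f z).im = 0 := by
  obtain ⟨K, hK⟩ := hB
  have him_le : ∀ w ∈ im ⁻¹' Ioo a b, |(f w).im| ≤ K := fun w hw ↦
    (abs_im_le_norm _).trans (hK w hw)
  refine le_antisymm ?_ (neg_nonpos.1 ?_)
  · exact im_nonpos_horizontal_strip hab hfd ⟨K, fun w hw ↦ (abs_le.1 (him_le w hw)).2⟩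
      (fun w hw ↦ (ha w hw).le) (fun w hw ↦ (hb w hw).le) hza hzb
  · simpa using im_nonpos_horizontal_strip (f := -f) hab hfd.neg
      ⟨K, fun w hw ↦ by simpa using neg_le.1 (abs_le.1 (him_le w hw)).1⟩
      (fun w hw ↦ by simp [ha w hw]) (fun w hw ↦ by simp [hb w hw]) hza hzb

end PhragmenLindelof

theorem DiffContOnCl.exists_real_const_of_im_eq_zero {U : Set ℂ} {f : ℂ → ℂ}
    (hf : DiffContOnCl ℂ f U) (hU : IsOpen U) (hUc : IsConnected U)
    (him : ∀ z ∈ U, (f z).im = 0) : ∃ c : ℝ, ∀ z ∈ closure U, f z = c := by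
  obtain ⟨c, hc⟩ := (hf.differentiableOn.analyticOnNhd hU).eq_const_add_im_mul_I_of_re_eq_const
    him hU hUc
  refine ⟨c, fun z hz ↦ ?_⟩
  refine EqOn.of_subset_closure (fun w hw ↦ ?_) hf.continuousOn continuousOn_const
    subset_closure subset_rfl hz
  simpa using hc w hw

/-- A bounded holomorphic function on the open strip, continuous up to the boundary, which is
real-valued on both boundary lines, is a real constant. -/
theorem bounded_holomorphic_strip_real_boundary_constant
    (h : ℂ → ℂ)
    (hcont : ContinuousOn h closedStrip)
    (hhol : DifferentiableOn ℂ h openStrip)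
    (hbdd : ∃ K : ℝ, ∀ z ∈ closedStrip, ‖h z‖ ≤ K)
    (hb0 : ∀ s : ℝ, (h (s : ℂ)).im = 0)
    (hb1 : ∀ s : ℝ, (h (s + Complex.I)).im = 0) :
    ∃ c : ℝ, ∀ z ∈ closedStrip, h z = (c : ℂ) := by
  have hd : DiffContOnCl ℂ h openStrip := ⟨hhol, closure_openStrip ▸ hcont⟩
  obtain ⟨K, hK⟩ := hbdd
  have him : ∀ z ∈ openStrip, (h z).im = 0 := fun z hz ↦
    PhragmenLindelof.im_eq_zero_horizontal_strip zero_lt_one hd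
      ⟨K, fun w hw ↦ hK w ⟨hw.1.le, hw.2.le⟩⟩
      (fun w hw ↦ by rw [show w = (w.re : ℂ) from ext rfl (by simp [hw])]; exact hb0 w.re)
      (fun w hw ↦ by rw [show w = w.re + I from ext (by simp) (by simp [hw])]; exact hb1 w.re)
      hz.1.le hz.2.le
  simpa only [closure_openStrip] using
    hd.exists_real_const_of_im_eq_zero isOpen_openStrip isConnected_openStrip him
end

section
/- Let (A, ∂) be the free unital DGA over ℤ/2 on a set Q of generators, i.e. A is the free unital associative ℤ/2-algebra on Q and ∂ is a ℤ/2-linear derivation with ∂ ∘ ∂ = 0, and let ε : A → ℤ/2 be an augmentation. Set ∂^ε := Ψ^ε ∘ ∂ ∘ (Ψ^ε)^{-1}. Then for every generator q ∈ Q the word-length-0 component (∂^ε(q))⁰ vanishes, and the ℤ/2-linear map ∂_ε : A¹ → A¹ defined on generators by ∂_ε(q) := (∂^ε(q))¹ satisfies ∂_ε ∘ ∂_ε = 0; that is, the linearisation of the DGA induced by ε is a chain complex. -/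
/-! Put `D = Ψ ∘ ∂ ∘ Ψ⁻¹`, again a derivation with `D ∘ D = 0`. The constant term of `Ψ x`
is `ε x`, so `ε ∘ ∂ = 0` says that `D` has no constant terms; being a derivation, `D` kills scalars.
Since the free algebra is generated in degree one, every word of length `≥ 2` is a product
`q w` with `w` of length `≥ 1`, and the Leibniz rule `D (q w) = (D q) w + q (D w)` shows that
`D (q w)` has no component of length one. Hence `(D x)¹ = (D x¹)¹` for all `x`, and
`∂_ε (∂_ε q) = (D (D q)¹)¹ = (D (D q))¹ = 0`. -/

noncomputable section

/-- The free unital associative `ℤ/2`-algebra on a set `Q` of generators, realised as the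
tensor algebra over `ℤ/2` of the free vector space on `Q`. -/
abbrev FreeDGA (Q : Type) := TensorAlgebra (ZMod 2) (Q →₀ ZMod 2)

/-- The generator of the free algebra corresponding to `q ∈ Q`. -/
def FreeDGA.gen {Q : Type} (q : Q) : FreeDGA Q :=
  TensorAlgebra.ι (ZMod 2) (Finsupp.single q 1)

/-- The projection onto the word-length-`i` component for the word-length grading of the
free algebra. -/
def FreeDGA.proj (Q : Type) (i : ℕ) : FreeDGA Q →ₗ[ZMod 2] FreeDGA Q :=
  haveI : GradedAlgebra
      ((LinearMap.range
        (TensorAlgebra.ι (ZMod 2) : (Q →₀ ZMod 2) →ₗ[ZMod 2] FreeDGA Q) ^ ·)) :=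
    TensorAlgebra.gradedAlgebra
  GradedAlgebra.proj
    ((LinearMap.range
        (TensorAlgebra.ι (ZMod 2) : (Q →₀ ZMod 2) →ₗ[ZMod 2] FreeDGA Q) ^ ·)) i

namespace GradedAlgebra

open DirectSum

section

variable {ι R A : Type*} [DecidableEq ι] [AddMonoid ι] [CommSemiring R] [Semiring A]
  [Algebra R A] (𝒜 : ι → Submodule R A) [GradedAlgebra 𝒜] {x : A} {i j : ι}

theorem proj_eq_self_of_mem (hx : x ∈ 𝒜 i) : proj 𝒜 i x = x :=
  decompose_of_mem_same 𝒜 hx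

theorem proj_eq_zero_of_mem_of_ne (hx : x ∈ 𝒜 i) (hij : i ≠ j) : proj 𝒜 j x = 0 :=
  decompose_of_mem_ne 𝒜 hx hij

end

variable {R A : Type*} [CommSemiring R] [Semiring A] [Algebra R A]
  (𝒜 : ℕ → Submodule R A) [GradedAlgebra 𝒜]

theorem proj_zero_mul (a b : A) : proj 𝒜 0 (a * b) = proj 𝒜 0 a * proj 𝒜 0 b :=
  (GradedRing.projZeroRingHom 𝒜).map_mul a b

theorem proj_one_mul (a b : A) :
    proj 𝒜 1 (a * b) = proj 𝒜 0 a * proj 𝒜 1 b + proj 𝒜 1 a * proj 𝒜 0 b := by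
  induction a using DirectSum.Decomposition.inductionOn 𝒜 with
  | zero => simp
  | add a a' ha ha' => simp only [add_mul, map_add, ha, ha']; abel
  | @homogeneous i a =>
    obtain ⟨a, ha⟩ := a
    obtain rfl | rfl | hi : i = 0 ∨ i = 1 ∨ 1 < i := by omega
    · rw [proj_apply, coe_decompose_mul_of_left_mem_zero 𝒜 ha, proj_eq_self_of_mem 𝒜 ha,
        proj_eq_zero_of_mem_of_ne 𝒜 ha zero_ne_one, zero_mul, add_zero, proj_apply]
    · rw [proj_apply, coe_decompose_mul_of_left_mem_of_le 𝒜 ha le_rfl, Nat.sub_self,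
        proj_eq_self_of_mem 𝒜 ha, proj_eq_zero_of_mem_of_ne 𝒜 ha one_ne_zero, zero_mul,
        zero_add, proj_apply]
    · rw [proj_apply, coe_decompose_mul_of_left_mem_of_not_le 𝒜 ha (by omega),
        proj_eq_zero_of_mem_of_ne 𝒜 ha (by omega), proj_eq_zero_of_mem_of_ne 𝒜 ha (by omega),
        zero_mul, zero_mul, add_zero]

end GradedAlgebra

theorem LinearMap.map_algebraMap_eq_zero_of_leibniz {R A : Type*} [CommSemiring R] [Ring A]
    [Algebra R A] (D : A →ₗ[R] A) (hD : ∀ a b, D (a * b) = D a * b + a * D b) (r : R) :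
    D (algebraMap R A r) = 0 := by
  have h1 : D 1 = 0 := by simpa using hD 1 1
  rw [Algebra.algebraMap_eq_smul_one, map_smul, h1, smul_zero]

namespace TensorAlgebra

variable {R M : Type*} [CommRing R] [AddCommGroup M] [Module R M]

abbrev gradeProj (n : ℕ) : TensorAlgebra R M →ₗ[R] TensorAlgebra R M :=
  GradedAlgebra.proj (fun i : ℕ => LinearMap.range (ι R : M →ₗ[R] TensorAlgebra R M) ^ i) n

theorem ι_mem_range_pow_one (m : M) :
    ι R m ∈ LinearMap.range (ι R : M →ₗ[R] TensorAlgebra R M) ^ 1 := by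
  rw [pow_one]; exact LinearMap.mem_range_self _ m

theorem gradeProj_zero_map_eq_algebraMap (Ψ : TensorAlgebra R M →ₐ[R] TensorAlgebra R M)
    (ε : TensorAlgebra R M →ₐ[R] R)
    (hΨ : ∀ m, Ψ (ι R m) = ι R m + algebraMap R _ (ε (ι R m))) (x : TensorAlgebra R M) :
    gradeProj 0 (Ψ x) = algebraMap R _ (ε x) := by
  induction x using TensorAlgebra.induction with
  | algebraMap r =>
    rw [AlgHom.commutes, AlgHom.commutes, Algebra.algebraMap_self_apply]
    exact GradedAlgebra.proj_eq_self_of_mem _ (SetLike.algebraMap_mem_graded _ r)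
  | ι m =>
    rw [hΨ, map_add,
      GradedAlgebra.proj_eq_zero_of_mem_of_ne _ (ι_mem_range_pow_one m) one_ne_zero,
      GradedAlgebra.proj_eq_self_of_mem _ (SetLike.algebraMap_mem_graded _ _), zero_add]
  | mul a b ha hb => rw [map_mul, GradedAlgebra.proj_zero_mul, ha, hb, map_mul, map_mul]
  | add a b ha hb => rw [map_add, map_add, ha, hb, map_add, map_add]

section Derivation

variable (D : TensorAlgebra R M →ₗ[R] TensorAlgebra R M)

theorem gradeProj_one_map_eq_zero_of_mem_pow_add_two
    (hD : ∀ a b, D (a * b) = D a * b + a * D b) (hD0 : ∀ x, gradeProj 0 (D x) = 0)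
    {n : ℕ} {x : TensorAlgebra R M}
    (hx : x ∈ LinearMap.range (ι R : M →ₗ[R] TensorAlgebra R M) ^ (n + 2)) :
    gradeProj 1 (D x) = 0 := by
  rw [pow_succ'] at hx
  refine Submodule.mul_induction_on hx (fun a ha b hb => ?_) (fun a b ha hb => ?_)
  · have ha0 : gradeProj 0 a = 0 :=
      GradedAlgebra.proj_eq_zero_of_mem_of_ne _ (by rwa [pow_one]) one_ne_zero
    have hb0 : gradeProj 0 b = 0 := GradedAlgebra.proj_eq_zero_of_mem_of_ne _ hb (by omega)
    rw [hD, map_add, GradedAlgebra.proj_one_mul, GradedAlgebra.proj_one_mul, hD0, hD0, ha0, hb0]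
    simp
  · rw [map_add, map_add, ha, hb, add_zero]

theorem gradeProj_one_map_gradeProj_one (hD : ∀ a b, D (a * b) = D a * b + a * D b)
    (hD0 : ∀ x, gradeProj 0 (D x) = 0) (x : TensorAlgebra R M) :
    gradeProj 1 (D (gradeProj 1 x)) = gradeProj 1 (D x) := by
  induction x using DirectSum.Decomposition.inductionOn
    (LinearMap.range (ι R : M →ₗ[R] TensorAlgebra R M) ^ ·) with
  | zero => simp
  | add a b ha hb => rw [map_add, map_add, map_add, ha, hb, map_add, map_add]
  | @homogeneous i a =>
    obtain ⟨a, ha⟩ := a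
    rcases i with _ | _ | n
    · obtain ⟨r, rfl⟩ : ∃ r, algebraMap R _ r = a := by rwa [pow_zero, Submodule.mem_one] at ha
      rw [LinearMap.map_algebraMap_eq_zero_of_leibniz D hD, map_zero,
        GradedAlgebra.proj_eq_zero_of_mem_of_ne _ ha zero_ne_one, map_zero, map_zero]
    · rw [GradedAlgebra.proj_eq_self_of_mem _ ha]
    · rw [GradedAlgebra.proj_eq_zero_of_mem_of_ne _ ha (by omega), map_zero, map_zero,
        gradeProj_one_map_eq_zero_of_mem_pow_add_two D hD hD0 ha]

end Derivation

end TensorAlgebra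

theorem FreeDGA.map_ι_of_map_gen {Q : Type} (Ψ : FreeDGA Q →ₐ[ZMod 2] FreeDGA Q)
    (ε : FreeDGA Q →ₐ[ZMod 2] ZMod 2)
    (hΨ : ∀ q : Q, Ψ (FreeDGA.gen q) =
      FreeDGA.gen q + algebraMap (ZMod 2) (FreeDGA Q) (ε (FreeDGA.gen q)))
    (v : Q →₀ ZMod 2) :
    Ψ (TensorAlgebra.ι _ v) =
      TensorAlgebra.ι _ v + algebraMap _ _ (ε (TensorAlgebra.ι _ v)) := by
  have h : Ψ.toLinearMap ∘ₗ TensorAlgebra.ι (ZMod 2) =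
      TensorAlgebra.ι (ZMod 2) + Algebra.linearMap _ _ ∘ₗ ε.toLinearMap ∘ₗ TensorAlgebra.ι _ :=
    Finsupp.lhom_ext' fun q => LinearMap.ext_ring (hΨ q)
  exact LinearMap.congr_fun h v

/-- Linearisation of a free dg-algebra over `ℤ/2` by an augmentation `ε`: writing
`∂^ε = Ψ^ε ∘ ∂ ∘ (Ψ^ε)⁻¹`, the word-length-0 component of `∂^ε(q)` vanishes for every
generator `q`, and the linear map `∂_ε : q ↦ (∂^ε q)¹` squares to zero, i.e. the linearisation
of the DGA induced by `ε` is a chain complex. -/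
theorem FreeDGA.linearisation_is_complex (Q : Type)
    (d : FreeDGA Q →ₗ[ZMod 2] FreeDGA Q)
    (hder : ∀ a b : FreeDGA Q, d (a * b) = d a * b + a * d b)
    (hdd : ∀ a : FreeDGA Q, d (d a) = 0)
    (ε : FreeDGA Q →ₐ[ZMod 2] ZMod 2)
    (hε : ∀ a : FreeDGA Q, ε (d a) = 0)
    (Ψ Ψinv : FreeDGA Q →ₐ[ZMod 2] FreeDGA Q)
    (hΨ : ∀ q : Q, Ψ (FreeDGA.gen q) =
      FreeDGA.gen q + algebraMap (ZMod 2) (FreeDGA Q) (ε (FreeDGA.gen q)))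
    (hinv1 : ∀ a : FreeDGA Q, Ψinv (Ψ a) = a)
    (hinv2 : ∀ a : FreeDGA Q, Ψ (Ψinv a) = a) :
    (∀ q : Q, FreeDGA.proj Q 0 (Ψ (d (Ψinv (FreeDGA.gen q)))) = 0) ∧
    (∀ q : Q,
      FreeDGA.proj Q 1
        (Ψ (d (Ψinv (FreeDGA.proj Q 1 (Ψ (d (Ψinv (FreeDGA.gen q)))))))) = 0) := by
  let D : FreeDGA Q →ₗ[ZMod 2] FreeDGA Q := Ψ.toLinearMap ∘ₗ d ∘ₗ Ψinv.toLinearMap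
  have hD : ∀ a b, D (a * b) = D a * b + a * D b := fun a b => by
    simp only [D, LinearMap.comp_apply, AlgHom.toLinearMap_apply, map_mul, hder, map_add,
      hinv2]
  have hD0 : ∀ x, TensorAlgebra.gradeProj 0 (D x) = 0 := fun x => by
    simp only [D, LinearMap.comp_apply, AlgHom.toLinearMap_apply,
      TensorAlgebra.gradeProj_zero_map_eq_algebraMap Ψ ε (FreeDGA.map_ι_of_map_gen Ψ ε hΨ),
      hε, map_zero]
  have hDD : ∀ x, D (D x) = 0 := fun x => by
    simp only [D, LinearMap.comp_apply, AlgHom.toLinearMap_apply, hinv1, hdd, map_zero]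
  refine ⟨fun q => hD0 (FreeDGA.gen q), fun q => ?_⟩
  change TensorAlgebra.gradeProj 1 (D (TensorAlgebra.gradeProj 1 (D (FreeDGA.gen q)))) = 0
  rw [TensorAlgebra.gradeProj_one_map_gradeProj_one D hD hD0, hDD, map_zero]
end
end

section
/- Let (A′, ∂′) and (A, ∂) be free unital DGAs over ℤ/2 on generator sets Q′ and Q respectively, and let Φ : A′ → A be a unital algebra homomorphism with Φ ∘ ∂′ = ∂ ∘ Φ. If ε is an augmentation of (A, ∂), then ε′ := ε ∘ Φ is an augmentation of (A′, ∂′). Moreover, the map Ψ^ε ∘ Φ ∘ (Ψ^{ε′})^{-1} has vanishing word-length-0 component on every generator q′ ∈ Q′, and the ℤ/2-linear map Φ_ε : A′¹ → A¹ sending each generator q′ to the word-length-1 component of (Ψ^ε ∘ Φ ∘ (Ψ^{ε′})^{-1})(q′) is a chain map between the linearisations: ∂_ε ∘ Φ_ε = Φ_ε ∘ ∂′_{ε′}. -/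
noncomputable section

/-! Write `x₁` for the word-length-1 part of `x` and `ε₀` for the counit
`TensorAlgebra.algebraMapInv`. Since `(a b)₁ = ε₀(a) b₁ + ε₀(b) a₁`, a linear map `L` that kills
scalars and satisfies `L (a b) = ε₀(a) L b + ε₀(b) L a` satisfies `L (x₁) = L x`: both sides
agree on generators and obey the same product rule. Both `x ↦ (F x)₁` for an algebra map `F`
with `ε₀ ∘ F = ε₀` and `x ↦ (D x)₁` for a derivation `D` with `ε₀ ∘ D = 0` are of this kind.
Because `ε₀ ∘ Ψ^ε = ε`, this applies to `F = Ψ^ε ∘ Φ ∘ (Ψ^{ε′})⁻¹` and `D = Ψ^ε ∘ ∂ ∘ (Ψ^ε)⁻¹`,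
and the chain-map identity becomes `Ψ^ε ∘ ∂ ∘ Φ = Ψ^ε ∘ Φ ∘ ∂′` read in word length 1. -/

namespace TensorAlgebra

section Semiring

variable {R M : Type*} [CommSemiring R] [AddCommMonoid M] [Module R M]

variable (R M) in
abbrev grading (i : ℕ) : Submodule R (TensorAlgebra R M) :=
  LinearMap.range (ι R : M →ₗ[R] TensorAlgebra R M) ^ i

def proj (i : ℕ) : TensorAlgebra R M →ₗ[R] TensorAlgebra R M :=
  GradedAlgebra.proj (grading R M) i

theorem proj_of_mem_same {i : ℕ} {x : TensorAlgebra R M} (hx : x ∈ grading R M i) :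
    proj i x = x :=
  DirectSum.decompose_of_mem_same _ hx

theorem proj_of_mem_ne {i j : ℕ} {x : TensorAlgebra R M} (hx : x ∈ grading R M i)
    (h : i ≠ j) : proj j x = 0 :=
  DirectSum.decompose_of_mem_ne _ hx h

theorem ι_mem_grading_one (m : M) : ι R m ∈ grading R M 1 := by
  rw [grading, pow_one]
  exact LinearMap.mem_range_self _ m

theorem algebraMap_mem_grading_zero (r : R) :
    algebraMap R (TensorAlgebra R M) r ∈ grading R M 0 :=
  SetLike.algebraMap_mem_graded _ r

theorem algebraMapInv_ι (m : M) : algebraMapInv (ι R m) = 0 := by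
  simp [algebraMapInv]

theorem proj_zero_eq_algebraMap_algebraMapInv (x : TensorAlgebra R M) :
    proj 0 x = algebraMap R _ (algebraMapInv x) := by
  induction x using TensorAlgebra.induction with
  | algebraMap r =>
    rw [proj_of_mem_same (algebraMap_mem_grading_zero r), algebraMap_leftInverse M r]
  | ι m => rw [proj_of_mem_ne (ι_mem_grading_one m) one_ne_zero, algebraMapInv_ι, map_zero]
  | mul a b ha hb =>
    calc proj 0 (a * b) = proj 0 a * proj 0 b :=
          (GradedRing.projZeroRingHom (grading R M)).map_mul a b
      _ = _ := by rw [ha, hb, map_mul, map_mul]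
  | add a b ha hb => rw [map_add, map_add, map_add, ha, hb]

theorem proj_one_mul (a b : TensorAlgebra R M) :
    proj 1 (a * b) = algebraMapInv a • proj 1 b + algebraMapInv b • proj 1 a := by
  have h : proj 1 (a * b) = proj 0 a * proj 1 b + proj 1 a * proj 0 b := by
    rw [proj, GradedAlgebra.proj_apply, DirectSum.decompose_mul,
      DirectSum.coe_mul_apply_eq_sum_antidiagonal, Finset.Nat.sum_antidiagonal_succ,
      Finset.Nat.antidiagonal_zero, Finset.sum_singleton]
    rfl
  rw [h, proj_zero_eq_algebraMap_algebraMapInv, proj_zero_eq_algebraMap_algebraMapInv,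
    ← Algebra.smul_def, ← Algebra.commutes, ← Algebra.smul_def, add_comm]

theorem map_proj_one_of_map_mul {N : Type*} [AddCommMonoid N] [Module R N]
    (L : TensorAlgebra R M →ₗ[R] N) (h_algebraMap : ∀ r, L (algebraMap R _ r) = 0)
    (h_mul : ∀ a b, L (a * b) = algebraMapInv a • L b + algebraMapInv b • L a)
    (x : TensorAlgebra R M) : L (proj 1 x) = L x := by
  induction x using TensorAlgebra.induction with
  | algebraMap r =>
    rw [proj_of_mem_ne (algebraMap_mem_grading_zero r) zero_ne_one, map_zero, h_algebraMap]
  | ι m => rw [proj_of_mem_same (ι_mem_grading_one m)]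
  | mul a b ha hb => rw [proj_one_mul, map_add, map_smul, map_smul, ha, hb, h_mul]
  | add a b ha hb => rw [map_add, map_add, ha, hb, map_add]

theorem proj_one_algHom_proj_one {M' : Type*} [AddCommMonoid M'] [Module R M']
    (F : TensorAlgebra R M' →ₐ[R] TensorAlgebra R M)
    (hF : algebraMapInv.comp F = algebraMapInv) (x : TensorAlgebra R M') :
    proj 1 (F (proj 1 x)) = proj 1 (F x) :=
  map_proj_one_of_map_mul (proj 1 ∘ₗ F.toLinearMap)
    (fun r => by
      simp only [LinearMap.comp_apply, AlgHom.toLinearMap_apply, AlgHom.commutes]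
      exact proj_of_mem_ne (algebraMap_mem_grading_zero r) zero_ne_one)
    (fun a b => by
      simp only [LinearMap.comp_apply, AlgHom.toLinearMap_apply, map_mul, proj_one_mul,
        ← AlgHom.comp_apply, hF])
    x

end Semiring

theorem proj_one_derivation_proj_one {R M : Type*} [CommRing R] [AddCommGroup M] [Module R M]
    (D : TensorAlgebra R M →ₗ[R] TensorAlgebra R M)
    (hD : ∀ a b, D (a * b) = D a * b + a * D b) (hD_aug : ∀ x, algebraMapInv (D x) = 0)
    (x : TensorAlgebra R M) :
    proj 1 (D (proj 1 x)) = proj 1 (D x) := by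
  have hD_one : D 1 = 0 := by simpa using hD 1 1
  refine map_proj_one_of_map_mul (proj 1 ∘ₗ D) (fun r => ?_) (fun a b => ?_) x
  · simp [Algebra.algebraMap_eq_smul_one, hD_one]
  · simp only [LinearMap.comp_apply, hD, map_add, proj_one_mul, hD_aug, zero_smul, zero_add,
      add_comm]

end TensorAlgebra

open TensorAlgebra

namespace FreeDGA

theorem proj_eq_tensorAlgebra_proj (Q : Type) (i : ℕ) :
    FreeDGA.proj Q i = TensorAlgebra.proj i :=
  rfl

theorem algHom_ext {Q : Type} {A : Type*} [Semiring A] [Algebra (ZMod 2) A]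
    {f g : FreeDGA Q →ₐ[ZMod 2] A} (h : ∀ q, f (gen q) = g (gen q)) : f = g :=
  TensorAlgebra.hom_ext (Finsupp.lhom_ext' fun q => LinearMap.ext_ring (h q))

theorem algebraMapInv_comp_eq_of_apply_gen {Q : Type} {ε : FreeDGA Q →ₐ[ZMod 2] ZMod 2}
    {Ψ : FreeDGA Q →ₐ[ZMod 2] FreeDGA Q}
    (hΨ : ∀ q, Ψ (gen q) = gen q + algebraMap (ZMod 2) (FreeDGA Q) (ε (gen q))) :
    algebraMapInv.comp Ψ = ε :=
  algHom_ext fun q => by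
    rw [AlgHom.comp_apply, hΨ, map_add, gen, algebraMapInv_ι, algebraMap_leftInverse, zero_add]

end FreeDGA

theorem FreeDGA.linearised_chain_map_general (Q' Q : Type)
    (d' : FreeDGA Q' →ₗ[ZMod 2] FreeDGA Q')
    (d : FreeDGA Q →ₗ[ZMod 2] FreeDGA Q)
    (hder : ∀ a b : FreeDGA Q, d (a * b) = d a * b + a * d b)
    (Φ : FreeDGA Q' →ₐ[ZMod 2] FreeDGA Q)
    (hΦ : ∀ a : FreeDGA Q', Φ (d' a) = d (Φ a))
    (ε : FreeDGA Q →ₐ[ZMod 2] ZMod 2)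
    (hε : ∀ a : FreeDGA Q, ε (d a) = 0)
    (Ψ Ψinv : FreeDGA Q →ₐ[ZMod 2] FreeDGA Q)
    (hΨ : ∀ q : Q, Ψ (FreeDGA.gen q) =
      FreeDGA.gen q + algebraMap (ZMod 2) (FreeDGA Q) (ε (FreeDGA.gen q)))
    (hinv1 : ∀ a : FreeDGA Q, Ψinv (Ψ a) = a)
    (hinv2 : ∀ a : FreeDGA Q, Ψ (Ψinv a) = a)
    (Ψ' Ψ'inv : FreeDGA Q' →ₐ[ZMod 2] FreeDGA Q')
    (hΨ' : ∀ q' : Q', Ψ' (FreeDGA.gen q') =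
      FreeDGA.gen q' + algebraMap (ZMod 2) (FreeDGA Q') ((ε.comp Φ) (FreeDGA.gen q')))
    (hinv1' : ∀ a : FreeDGA Q', Ψ'inv (Ψ' a) = a)
    (hinv2' : ∀ a : FreeDGA Q', Ψ' (Ψ'inv a) = a) :
    (∀ a : FreeDGA Q', (ε.comp Φ) (d' a) = 0) ∧
    (∀ q' : Q', FreeDGA.proj Q 0 (Ψ (Φ (Ψ'inv (FreeDGA.gen q')))) = 0) ∧
    (∀ q' : Q',
      FreeDGA.proj Q 1
          (Ψ (d (Ψinv (FreeDGA.proj Q 1 (Ψ (Φ (Ψ'inv (FreeDGA.gen q')))))))) =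
        FreeDGA.proj Q 1
          (Ψ (Φ (Ψ'inv
            (FreeDGA.proj Q' 1 (Ψ' (d' (Ψ'inv (FreeDGA.gen q'))))))))) := by
  have hΨε := algebraMapInv_comp_eq_of_apply_gen hΨ
  have hΨε' := algebraMapInv_comp_eq_of_apply_gen hΨ'
  let F := (Ψ.comp Φ).comp Ψ'inv
  have hF : algebraMapInv.comp F = algebraMapInv :=
    calc algebraMapInv.comp F = ((algebraMapInv.comp Ψ).comp Φ).comp Ψ'inv := rfl
      _ = (algebraMapInv.comp Ψ').comp Ψ'inv := by rw [hΨε, hΨε']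
      _ = algebraMapInv := AlgHom.ext fun x => congrArg algebraMapInv (hinv2' x)
  let D := Ψ.toLinearMap ∘ₗ d ∘ₗ Ψinv.toLinearMap
  have hD : ∀ a b, D (a * b) = D a * b + a * D b := fun a b => by
    simp only [D, LinearMap.comp_apply, AlgHom.toLinearMap_apply, map_mul, hder, map_add,
      hinv2]
  have hD_aug : ∀ x, algebraMapInv (D x) = 0 := fun x =>
    (DFunLike.congr_fun hΨε _).trans (hε _)
  refine ⟨fun a => ?_, fun q' => ?_, fun q' => ?_⟩
  · rw [AlgHom.comp_apply, hΦ, hε]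
  · rw [proj_eq_tensorAlgebra_proj, proj_zero_eq_algebraMap_algebraMapInv,
      show algebraMapInv (Ψ (Φ (Ψ'inv (gen q')))) = algebraMapInv (gen q') from
        DFunLike.congr_fun hF _,
      gen, algebraMapInv_ι, map_zero]
  · calc FreeDGA.proj Q 1 (D (FreeDGA.proj Q 1 (F (gen q'))))
        = FreeDGA.proj Q 1 (D (F (gen q'))) := proj_one_derivation_proj_one D hD hD_aug _
      _ = FreeDGA.proj Q 1 (F (Ψ' (d' (Ψ'inv (gen q'))))) := by
        simp only [D, F, LinearMap.comp_apply, AlgHom.toLinearMap_apply, AlgHom.comp_apply,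
          hinv1, hinv1', hΦ]
      _ = FreeDGA.proj Q 1 (F (FreeDGA.proj Q' 1 (Ψ' (d' (Ψ'inv (gen q')))))) :=
        (proj_one_algHom_proj_one F hF _).symm

/-- A DGA-morphism `Φ : (A′,∂′) → (A,∂)` of free unital DGAs over `ℤ/2` pulls an augmentation
`ε` of `(A,∂)` back to the augmentation `ε′ = ε ∘ Φ` of `(A′,∂′)`; moreover
`Ψ^ε ∘ Φ ∘ (Ψ^{ε′})⁻¹` has vanishing word-length-0 component on generators, and the induced
linear map `Φ_ε : q′ ↦ (Ψ^ε ∘ Φ ∘ (Ψ^{ε′})⁻¹ (q′))¹` is a chain map between the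
linearisations: `∂_ε ∘ Φ_ε = Φ_ε ∘ ∂′_{ε′}`. -/
theorem FreeDGA.linearised_chain_map (Q' Q : Type)
    (d' : FreeDGA Q' →ₗ[ZMod 2] FreeDGA Q')
    (hder' : ∀ a b : FreeDGA Q', d' (a * b) = d' a * b + a * d' b)
    (hdd' : ∀ a : FreeDGA Q', d' (d' a) = 0)
    (d : FreeDGA Q →ₗ[ZMod 2] FreeDGA Q)
    (hder : ∀ a b : FreeDGA Q, d (a * b) = d a * b + a * d b)
    (hdd : ∀ a : FreeDGA Q, d (d a) = 0)
    (Φ : FreeDGA Q' →ₐ[ZMod 2] FreeDGA Q)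
    (hΦ : ∀ a : FreeDGA Q', Φ (d' a) = d (Φ a))
    (ε : FreeDGA Q →ₐ[ZMod 2] ZMod 2)
    (hε : ∀ a : FreeDGA Q, ε (d a) = 0)
    (Ψ Ψinv : FreeDGA Q →ₐ[ZMod 2] FreeDGA Q)
    (hΨ : ∀ q : Q, Ψ (FreeDGA.gen q) =
      FreeDGA.gen q + algebraMap (ZMod 2) (FreeDGA Q) (ε (FreeDGA.gen q)))
    (hinv1 : ∀ a : FreeDGA Q, Ψinv (Ψ a) = a)
    (hinv2 : ∀ a : FreeDGA Q, Ψ (Ψinv a) = a)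
    (Ψ' Ψ'inv : FreeDGA Q' →ₐ[ZMod 2] FreeDGA Q')
    (hΨ' : ∀ q' : Q', Ψ' (FreeDGA.gen q') =
      FreeDGA.gen q' + algebraMap (ZMod 2) (FreeDGA Q') ((ε.comp Φ) (FreeDGA.gen q')))
    (hinv1' : ∀ a : FreeDGA Q', Ψ'inv (Ψ' a) = a)
    (hinv2' : ∀ a : FreeDGA Q', Ψ' (Ψ'inv a) = a) :
    (∀ a : FreeDGA Q', (ε.comp Φ) (d' a) = 0) ∧
    (∀ q' : Q', FreeDGA.proj Q 0 (Ψ (Φ (Ψ'inv (FreeDGA.gen q')))) = 0) ∧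
    (∀ q' : Q',
      FreeDGA.proj Q 1
          (Ψ (d (Ψinv (FreeDGA.proj Q 1 (Ψ (Φ (Ψ'inv (FreeDGA.gen q')))))))) =
        FreeDGA.proj Q 1
          (Ψ (Φ (Ψ'inv
            (FreeDGA.proj Q' 1 (Ψ' (d' (Ψ'inv (FreeDGA.gen q'))))))))) :=
  FreeDGA.linearised_chain_map_general Q' Q d' d hder Φ hΦ ε hε Ψ Ψinv hΨ hinv1 hinv2 Ψ' Ψ'inv hΨ'
    hinv1' hinv2'
end
end
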